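/- arXiv:2207.03922 — 4 statements merged into one kernel-verified Lean document; each statement's English description precedes it below -/
import Mathlib

section
/- Let μ be a finite positive Borel measure on ℝ × ℝ^d, let ν be a finite positive Borel measure on ℝ, and let (μ_t)_{t∈ℝ} be a disintegration of μ with respect to the time projection t and ν; that is: for every φ ∈ C_c(ℝ × ℝ^d) the map t ↦ ∫ φ dμ_t is Borel, for ν-a.e. t the measure μ_t is a finite measure concentrated on {t} × ℝ^d, and μ(A) = ∫_ℝ μ_t(A) dν(t) for every Borel set A ⊆ ℝ × ℝ^d. Then for ν-a.e. t ∈ ℝ one has: ν((t−h, t+h)) > 0 for all h > 0, and for every φ ∈ C_c(ℝ × ℝ^d), ∫ φ dμ_t = lim_{h→0⁺} ( ∫_{(t−h,t+h)×ℝ^d} φ dμ ) / ν((t−h,t+h)). In other words, the restrictions μ restricted to (t−h,t+h)×ℝ^d, normalized by ν((t−h,t+h)), converge weakly to μ_t as h → 0. -/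
/-! For `ψ` continuous with compact support, `t ↦ ∫ ψ dμ_t` is `ν`-integrable and its integral
over an interval `I` is `∫_{I × ℝ^d} ψ dμ`, so the slab averages of `ψ` are the `ν`-averages of
this function over `(t - h, t + h)`, which converge for `ν`-a.e. `t` by the Besicovitch
differentiation theorem. Running this for a countable sup-norm dense family of such `ψ` and for
`ψ = 1` (which controls the masses) gives the convergence for every `φ` simultaneously.
The identity `μ = ν.bind μ_t` behind the first step needs `t ↦ μ_t` to be a.e.-measurable, which
follows from the measurability of `t ↦ ∫ φ dμ_t` by approximating indicators of open sets with
compactly supported continuous functions. -/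

open MeasureTheory Filter Set Topology Metric
open scoped ENNReal NNReal

theorem IsOpen.exists_tendsto_indicator_hasCompactSupport {X : Type*} [PseudoEMetricSpace X]
    [LocallyCompactSpace X] [SigmaCompactSpace X] {U : Set X} (hU : IsOpen U) :
    ∃ φ : ℕ → C(X, ℝ), (∀ n, HasCompactSupport (φ n)) ∧ (∀ n x, φ n x ∈ Icc (0 : ℝ) 1) ∧
      ∀ x, Tendsto (fun n => φ n x) atTop (𝓝 (U.indicator 1 x)) := by
  obtain ⟨F, hF_closed, hFU, hF_union, hF_mono⟩ := hU.exists_iUnion_isClosed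
  have hK : ∀ n, IsCompact (F n ∩ compactCovering X n) := fun n =>
    (isCompact_compactCovering X n).inter_left (hF_closed n)
  choose φ hφ_one hφ_zero hφ_supp hφ_range using fun n =>
    exists_continuous_one_zero_of_isCompact (hK n) hU.isClosed_compl
      (disjoint_compl_right_iff_subset.2 (inter_subset_left.trans (hFU n)))
  refine ⟨φ, hφ_supp, hφ_range, fun x => ?_⟩
  by_cases hx : x ∈ U
  · obtain ⟨k, hk⟩ := mem_iUnion.1 (hF_union.symm ▸ hx : x ∈ ⋃ n, F n)
    obtain ⟨j, hj⟩ := mem_iUnion.1 ((iUnion_compactCovering X).symm ▸ mem_univ x :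
      x ∈ ⋃ n, compactCovering X n)
    rw [indicator_of_mem hx]
    refine tendsto_const_nhds.congr' ?_
    filter_upwards [eventually_ge_atTop (max k j)] with n hn
    exact (hφ_one n ⟨hF_mono (le_of_max_le_left hn) hk,
      compactCovering_subset X (le_of_max_le_right hn) hj⟩).symm
  · simp only [indicator_of_notMem hx, hφ_zero _ hx]
    exact tendsto_const_nhds

section
variable {X : Type*} [PseudoEMetricSpace X] [LocallyCompactSpace X] [SigmaCompactSpace X]
  [MeasurableSpace X]

theorem IsOpen.exists_tendsto_integral_measureReal [OpensMeasurableSpace X] {U : Set X}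
    (hU : IsOpen U) :
    ∃ φ : ℕ → C(X, ℝ), (∀ n, HasCompactSupport (φ n)) ∧
      ∀ (m : Measure X) [IsFiniteMeasure m],
        Tendsto (fun n => ∫ x, φ n x ∂m) atTop (𝓝 (m.real U)) := by
  obtain ⟨φ, hφ_supp, hφ_range, hφ_lim⟩ := hU.exists_tendsto_indicator_hasCompactSupport
  refine ⟨φ, hφ_supp, fun m _ => ?_⟩
  rw [← integral_indicator_one hU.measurableSet]
  refine tendsto_integral_of_dominated_convergence (fun _ => 1)
    (fun n => (φ n).continuous.aestronglyMeasurable) (integrable_const 1)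
    (fun n => ae_of_all _ fun x => ?_) (ae_of_all _ hφ_lim)
  rw [Real.norm_of_nonneg (hφ_range n x).1]
  exact (hφ_range n x).2

theorem aemeasurable_measure_of_measurable_integral [BorelSpace X] {T : Type*}
    [MeasurableSpace T] {ν : Measure T} {κ : T → Measure X}
    (hκ : ∀ φ : X → ℝ, Continuous φ → HasCompactSupport φ → Measurable fun t => ∫ x, φ x ∂κ t)
    (hfin : ∀ᵐ t ∂ν, IsFiniteMeasure (κ t)) : AEMeasurable κ ν := by
  classical
  -- `measure_of_isPiSystem` needs a finite measure at every `t`, so `κ` is replaced by `0`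
  -- on a measurable null set.
  set N := toMeasurable ν {t | ¬IsFiniteMeasure (κ t)}
  have hN : MeasurableSet N := measurableSet_toMeasurable _ _
  let κ' : T → Measure X := fun t => if t ∈ N then 0 else κ t
  have hκ'_fin : ∀ t, IsFiniteMeasure (κ' t) := fun t => by
    by_cases ht : t ∈ N
    · simp only [κ', if_pos ht]; infer_instance
    · simp only [κ', if_neg ht]
      by_contra h
      exact ht (subset_toMeasurable _ _ h)
  have hκ'_int : ∀ φ : X → ℝ, Continuous φ → HasCompactSupport φ →
      Measurable fun t => ∫ x, φ x ∂κ' t := fun φ hφ hφs => by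
    have : (fun t => ∫ x, φ x ∂κ' t) = N.piecewise (fun _ => 0) (fun t => ∫ x, φ x ∂κ t) := by
      ext t; by_cases ht : t ∈ N <;> simp [κ', ht]
    rw [this]
    exact measurable_const.piecewise hN (hκ φ hφ hφs)
  have hopen : ∀ U, IsOpen U → Measurable fun t => κ' t U := fun U hU => by
    obtain ⟨φ, hφ_supp, hφ_lim⟩ := hU.exists_tendsto_integral_measureReal
    have hreal : Measurable fun t => (κ' t).real U :=
      measurable_of_tendsto_metrizable (fun n => hκ'_int _ (φ n).continuous (hφ_supp n))
        (tendsto_pi_nhds.2 fun t => hφ_lim (κ' t))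
    simpa only [measureReal_def, ENNReal.ofReal_toReal (measure_ne_top _ _)] using
      hreal.ennreal_ofReal
  have hN0 : ν N = 0 := by rw [measure_toMeasurable]; exact ae_iff.1 hfin
  refine ⟨κ', .measure_of_isPiSystem BorelSpace.measurable_eq isPiSystem_isOpen
    (fun U hU => hopen U hU) (hopen univ isOpen_univ), ?_⟩
  filter_upwards [measure_eq_zero_iff_ae_notMem.1 hN0] with t ht
  simp [κ', ht]
end

namespace MeasureTheory.Measure
variable {α β : Type*} [MeasurableSpace α] [MeasurableSpace β] {m : Measure α}
  {κ : α → Measure β}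

theorem bind_restrict_of_ae_concentrated (hκ : AEMeasurable κ m) {π : β → α}
    (hπ : Measurable π) (hconc : ∀ᵐ a ∂m, ∀ᵐ b ∂κ a, π b = a) {S : Set α}
    (hS : MeasurableSet S) : (m.restrict S).bind κ = (m.bind κ).restrict (π ⁻¹' S) := by
  ext A hA
  rw [bind_apply hA hκ.restrict, restrict_apply hA, bind_apply (hA.inter (hπ hS)) hκ,
    ← lintegral_indicator hS]
  refine lintegral_congr_ae ?_
  filter_upwards [hconc] with a ha
  by_cases haS : a ∈ S
  · have hmem : ∀ᵐ b ∂κ a, b ∈ π ⁻¹' S := ha.mono fun b hb => by simpa [hb] using haS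
    rw [indicator_of_mem haS, ← restrict_apply hA, restrict_eq_self_of_ae_mem hmem]
  · have hnot : ∀ᵐ b ∂κ a, b ∉ π ⁻¹' S := ha.mono fun b hb => by simpa [hb] using haS
    rw [indicator_of_notMem haS]
    exact (measure_mono_null inter_subset_right (measure_eq_zero_iff_ae_notMem.2 hnot)).symm

theorem integrable_toReal_lintegral_bind (hκ : AEMeasurable κ m) {g : β → ℝ≥0∞}
    (hg : AEMeasurable g (m.bind κ)) (hfin : ∫⁻ x, g x ∂m.bind κ ≠ ∞) :
    Integrable (fun a => (∫⁻ x, g x ∂κ a).toReal) m ∧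
      ∫ a, (∫⁻ x, g x ∂κ a).toReal ∂m = (∫⁻ x, g x ∂m.bind κ).toReal := by
  have hmeas : AEMeasurable (fun a => ∫⁻ x, g x ∂κ a) m :=
    (aemeasurable_lintegral hg).comp_aemeasurable hκ
  rw [lintegral_bind hκ hg] at hfin ⊢
  exact ⟨integrable_toReal_of_lintegral_ne_top hmeas hfin,
    integral_toReal hmeas (ae_lt_top' hmeas hfin)⟩

theorem integral_bind (hκ : AEMeasurable κ m) {f : β → ℝ} (hf : Integrable f (m.bind κ)) :
    Integrable (fun a => ∫ x, f x ∂κ a) m ∧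
      ∫ x, f x ∂m.bind κ = ∫ a, ∫ x, f x ∂κ a ∂m := by
  have hf_meas : AEMeasurable f (m.bind κ) := hf.aemeasurable
  obtain ⟨hpos_int, hpos⟩ := integrable_toReal_lintegral_bind hκ hf_meas.ennreal_ofReal
    hf.lintegral_lt_top.ne
  obtain ⟨hneg_int, hneg⟩ := integrable_toReal_lintegral_bind hκ hf_meas.neg.ennreal_ofReal
    hf.neg.lintegral_lt_top.ne
  simp only [Pi.neg_apply] at hneg_int hneg
  have hfin : ∀ᵐ a ∂m, ∫⁻ x, ‖f x‖ₑ ∂κ a < ∞ := by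
    refine ae_lt_top' ((aemeasurable_lintegral hf_meas.enorm).comp_aemeasurable hκ) ?_
    rw [← lintegral_bind hκ hf_meas.enorm]
    exact hf.hasFiniteIntegral.ne
  have hsplit : ∀ᵐ a ∂m, ∫ x, f x ∂κ a =
      (∫⁻ x, ENNReal.ofReal (f x) ∂κ a).toReal - (∫⁻ x, ENNReal.ofReal (-f x) ∂κ a).toReal := by
    filter_upwards [hκ.ae_of_bind hf_meas, hfin] with a ha_meas ha_fin
    exact integral_eq_lintegral_pos_part_sub_lintegral_neg_part
      ⟨ha_meas.aestronglyMeasurable, ha_fin⟩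
  refine ⟨(hpos_int.sub hneg_int).congr (hsplit.mono fun a ha => ha.symm), ?_⟩
  rw [integral_congr_ae hsplit, integral_sub hpos_int hneg_int, hpos, hneg,
    integral_eq_lintegral_pos_part_sub_lintegral_neg_part hf]

theorem setIntegral_bind_of_ae_concentrated (hκ : AEMeasurable κ m) {π : β → α}
    (hπ : Measurable π) (hconc : ∀ᵐ a ∂m, ∀ᵐ b ∂κ a, π b = a) {f : β → ℝ}
    (hf : Integrable f (m.bind κ)) {S : Set α} (hS : MeasurableSet S) :
    ∫ a in S, ∫ x, f x ∂κ a ∂m = ∫ x in π ⁻¹' S, f x ∂m.bind κ := by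
  have hf' : Integrable f ((m.restrict S).bind κ) := by
    rw [bind_restrict_of_ae_concentrated hκ hπ hconc hS]
    exact hf.restrict
  rw [← bind_restrict_of_ae_concentrated hκ hπ hconc hS]
  exact (integral_bind hκ.restrict hf').2.symm

end MeasureTheory.Measure

section
variable {X : Type*} [PseudoMetricSpace X] [ProperSpace X] [MeasurableSpace X]
  [OpensMeasurableSpace X] {ν : Measure X} [IsLocallyFiniteMeasure ν] {f : X → ℝ} {x : X}

theorem tendsto_setAverage_closedBall_ball (hf : LocallyIntegrable f ν) {h : ℝ}
    (hpos : 0 < ν (ball x h)) {r : ℕ → ℝ} (hr_mono : Monotone r) (hr_lt : ∀ n, r n < h)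
    (hr_lim : Tendsto r atTop (𝓝 h)) :
    Tendsto (fun n => ⨍ y in closedBall x (r n), f y ∂ν) atTop (𝓝 (⨍ y in ball x h, f y ∂ν)) := by
  have hunion : ⋃ n, closedBall x (r n) = ball x h := by
    ext y
    simp only [mem_iUnion, mem_closedBall, mem_ball]
    exact ⟨fun ⟨n, hn⟩ => hn.trans_lt (hr_lt n), fun hy => (hr_lim.eventually_const_le hy).exists⟩
  have hmono : Monotone fun n => closedBall x (r n) := fun a b hab =>
    closedBall_subset_closedBall (hr_mono hab)
  have hmeasure : Tendsto (fun n => ν.real (closedBall x (r n))) atTop (𝓝 (ν.real (ball x h))) := by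
    rw [← hunion]
    exact (ENNReal.tendsto_toReal (hunion ▸ measure_ball_lt_top.ne)).comp
      (tendsto_measure_iUnion_atTop hmono)
  have hf_ball : IntegrableOn f (⋃ n, closedBall x (r n)) ν := hunion ▸
    (hf.integrableOn_isCompact (isCompact_closedBall x h)).mono_set ball_subset_closedBall
  have hintegral :=
    tendsto_setIntegral_of_monotone (fun n => measurableSet_closedBall) hmono hf_ball
  rw [hunion] at hintegral
  simp only [setAverage_eq]
  exact (hmeasure.inv₀ (ENNReal.toReal_pos hpos.ne' measure_ball_lt_top.ne).ne').smul hintegral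

theorem tendsto_setAverage_ball_of_closedBall (hf : LocallyIntegrable f ν)
    (hpos : ∀ h > 0, 0 < ν (ball x h)) {L : ℝ}
    (hL : Tendsto (fun r => ⨍ y in closedBall x r, f y ∂ν) (𝓝[>] 0) (𝓝 L)) :
    Tendsto (fun h => ⨍ y in ball x h, f y ∂ν) (𝓝[>] 0) (𝓝 L) := by
  refine (closed_nhds_basis L).tendsto_right_iff.2 fun s ⟨hs, hs_closed⟩ => ?_
  obtain ⟨δ, hδ, hδs⟩ := (nhdsGT_basis (0 : ℝ)).eventually_iff.1 (hL hs)
  filter_upwards [Ioo_mem_nhdsGT hδ] with h hh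
  obtain ⟨r, hr_mono, hr_mem, hr_lim⟩ := exists_seq_strictMono_tendsto' hh.1
  exact hs_closed.mem_of_tendsto
    (tendsto_setAverage_closedBall_ball hf (hpos h hh.1) hr_mono.monotone
      (fun n => (hr_mem n).2) hr_lim)
    (Eventually.of_forall fun n => hδs ⟨(hr_mem n).1, (hr_mem n).2.trans hh.2⟩)
end

theorem Real.ae_forall_measure_Ioo_pos (ν : Measure ℝ) :
    ∀ᵐ t ∂ν, ∀ h > 0, 0 < ν (Ioo (t - h) (t + h)) := by
  filter_upwards [Measure.support_mem_ae] with t ht h hh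
  exact (Measure.mem_support_iff_forall t).1 ht _ (Ioo_mem_nhds (by linarith) (by linarith))

theorem Real.ae_tendsto_setAverage_Ioo {ν : Measure ℝ} [IsLocallyFiniteMeasure ν] {f : ℝ → ℝ}
    (hf : LocallyIntegrable f ν) :
    ∀ᵐ t ∂ν, Tendsto (fun h => ⨍ s in Ioo (t - h) (t + h), f s ∂ν) (𝓝[>] 0) (𝓝 (f t)) := by
  filter_upwards [(Besicovitch.vitaliFamily ν).ae_tendsto_average hf,
    Real.ae_forall_measure_Ioo_pos ν] with t ht hpos
  simp_rw [← Real.ball_eq_Ioo] at hpos ⊢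
  exact tendsto_setAverage_ball_of_closedBall hf hpos (ht.comp (Besicovitch.tendsto_filterAt ν t))

theorem exists_countable_dense_hasCompactSupport (X : Type*) [TopologicalSpace X] [T2Space X]
    [LocallyCompactSpace X] [SecondCountableTopology X] :
    ∃ D : Set (X → ℝ), D.Countable ∧ (∀ ψ ∈ D, Continuous ψ ∧ HasCompactSupport ψ) ∧
      ∀ φ : X → ℝ, Continuous φ → HasCompactSupport φ → ∀ ε > 0,
        ∃ ψ ∈ D, ∀ x, |φ x - ψ x| ≤ ε := by
  -- `C` is dense only for the compact-open topology, i.e. uniformly on compacts; the cutoffs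
  -- `χ n` turn this into uniform approximation by compactly supported functions.
  obtain ⟨C, hC_count, hC_dense⟩ := TopologicalSpace.exists_countable_dense C(X, ℝ)
  let K := CompactExhaustion.choice X
  choose χ hχ_one _ hχ_supp hχ_range using fun n =>
    exists_continuous_one_zero_of_isCompact (K.isCompact n) isClosed_empty (disjoint_empty _)
  refine ⟨⋃ n, (fun g : C(X, ℝ) => fun x => g x * χ n x) '' C,
    countable_iUnion fun n => hC_count.image _, ?_, ?_⟩
  · simp only [mem_iUnion, mem_image]
    rintro ψ ⟨n, g, -, rfl⟩
    exact ⟨g.continuous.mul (χ n).continuous, (hχ_supp n).mul_left⟩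
  · intro φ hφ hφ_supp ε hε
    obtain ⟨n, hn⟩ := K.exists_superset_of_isCompact hφ_supp
    obtain ⟨g, hgC, hg⟩ : ∃ g ∈ C, ∀ x ∈ tsupport (χ n), dist (φ x) (g x) < ε := by
      obtain ⟨u, huC, hu⟩ :=
        mem_closure_iff_seq_limit.1 (hC_dense.closure_eq ▸ mem_univ (⟨φ, hφ⟩ : C(X, ℝ)))
      have := ContinuousMap.tendsto_iff_forall_isCompact_tendstoUniformlyOn.1 hu _ (hχ_supp n)
      obtain ⟨k, hk⟩ := (Metric.tendstoUniformlyOn_iff.1 this ε hε).exists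
      exact ⟨u k, huC k, hk⟩
    have hφχ : ∀ x, φ x = φ x * χ n x := fun x => by
      by_cases hx : x ∈ tsupport φ
      · rw [hχ_one n (hn hx), Pi.one_apply, mul_one]
      · rw [image_eq_zero_of_notMem_tsupport hx, zero_mul]
    refine ⟨fun x => g x * χ n x, mem_iUnion.2 ⟨n, mem_image_of_mem _ hgC⟩, fun x => ?_⟩
    rw [hφχ x, ← sub_mul, abs_mul, abs_of_nonneg (hχ_range n x).1]
    by_cases hx : x ∈ tsupport (χ n)
    · rw [← Real.dist_eq]
      exact (mul_le_of_le_one_right dist_nonneg (hχ_range n x).2).trans (hg x hx).le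
    · rw [image_eq_zero_of_notMem_tsupport hx, mul_zero]
      exact hε.le

theorem tendsto_integral_of_forall_approx {ι X : Type*} [TopologicalSpace X] [MeasurableSpace X]
    [OpensMeasurableSpace X] {l : Filter ι} {m : ι → Measure X} [∀ i, IsFiniteMeasure (m i)]
    {m₀ : Measure X} [IsFiniteMeasure m₀]
    (hmass : Tendsto (fun i => (m i).real univ) l (𝓝 (m₀.real univ)))
    {φ : X → ℝ} (hφ : Continuous φ) (hφ_supp : HasCompactSupport φ)
    (happrox : ∀ ε > 0, ∃ ψ : X → ℝ, Continuous ψ ∧ HasCompactSupport ψ ∧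
      (∀ x, |φ x - ψ x| ≤ ε) ∧ Tendsto (fun i => ∫ x, ψ x ∂m i) l (𝓝 (∫ x, ψ x ∂m₀))) :
    Tendsto (fun i => ∫ x, φ x ∂m i) l (𝓝 (∫ x, φ x ∂m₀)) := by
  refine Metric.tendsto_nhds.2 fun ε hε => ?_
  set M := m₀.real univ
  have hM : 0 ≤ M := measureReal_nonneg
  set δ := ε / (3 * (M + 1))
  have hδ : 0 < δ := by positivity
  obtain ⟨ψ, hψ, hψ_supp, hφψ, hψ_lim⟩ := happrox δ hδ
  have hclose : ∀ (ρ : Measure X) [IsFiniteMeasure ρ],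
      dist (∫ x, φ x ∂ρ) (∫ x, ψ x ∂ρ) ≤ δ * ρ.real univ := fun ρ _ => by
    rw [dist_eq_norm, ← integral_sub (hφ.integrable_of_hasCompactSupport hφ_supp)
      (hψ.integrable_of_hasCompactSupport hψ_supp)]
    exact norm_integral_le_of_norm_le_const (ae_of_all _ fun x => hφψ x)
  filter_upwards [Metric.tendsto_nhds.1 hψ_lim (ε / 3) (by positivity),
    hmass.eventually (gt_mem_nhds (lt_add_one M))] with i hψi hmi
  have hδM : δ * (M + 1) = ε / 3 := by simp only [δ]; field_simp
  have h₁ : dist (∫ x, φ x ∂m i) (∫ x, ψ x ∂m i) ≤ ε / 3 :=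
    (hclose (m i)).trans (hδM ▸ mul_le_mul_of_nonneg_left hmi.le hδ.le)
  have h₃ : dist (∫ x, ψ x ∂m₀) (∫ x, φ x ∂m₀) ≤ ε / 3 := by
    rw [dist_comm]
    exact (hclose m₀).trans (hδM ▸ mul_le_mul_of_nonneg_left (by linarith) hδ.le)
  linarith [dist_triangle4 (∫ x, φ x ∂m i) (∫ x, ψ x ∂m i) (∫ x, ψ x ∂m₀) (∫ x, φ x ∂m₀)]

-- An `ℝ≥0` scalar keeps the measure finite, and `0⁻¹ = 0` matches the convention `x / 0 = 0`.
theorem integral_toNNReal_inv_smul {X : Type*} [MeasurableSpace X] (ρ : Measure X) (c : ℝ≥0∞)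
    (f : X → ℝ) : ∫ x, f x ∂(c.toNNReal⁻¹ • ρ) = (∫ x, f x ∂ρ) / c.toReal := by
  rw [integral_smul_nnreal_measure, NNReal.smul_def, smul_eq_mul, NNReal.coe_inv,
    ENNReal.coe_toNNReal_eq_toReal, inv_mul_eq_div]

section
variable {Y : Type*} [MeasurableSpace Y] {ν : Measure ℝ} [IsLocallyFiniteMeasure ν]
  {κ : ℝ → Measure (ℝ × Y)}

theorem ae_tendsto_integral_slab_div (hκ : AEMeasurable κ ν)
    (hconc : ∀ᵐ t ∂ν, ∀ᵐ z ∂κ t, z.1 = t) {f : ℝ × Y → ℝ} (hf : Integrable f (ν.bind κ)) :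
    ∀ᵐ t ∂ν, Tendsto (fun h => (∫ z in Ioo (t - h) (t + h) ×ˢ univ, f z ∂ν.bind κ) /
      (ν (Ioo (t - h) (t + h))).toReal) (𝓝[>] 0) (𝓝 (∫ z, f z ∂κ t)) := by
  filter_upwards [Real.ae_tendsto_setAverage_Ioo (Measure.integral_bind hκ hf).1.locallyIntegrable]
    with t ht
  refine ht.congr fun h => ?_
  rw [setAverage_eq, smul_eq_mul, inv_mul_eq_div, measureReal_def, prod_univ,
    Measure.setIntegral_bind_of_ae_concentrated hκ measurable_fst hconc hf measurableSet_Ioo]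
end

/-- Explicit characterisation of a disintegration: if `(μt t)` is a disintegration of
the finite measure `μ` on `ℝ × ℝ^d` with respect to the time projection and the finite
measure `ν` on `ℝ`, then for `ν`-a.e. `t` the normalized restrictions of `μ` to the
slabs `(t-h, t+h) × ℝ^d` converge weakly to `μt t` as `h → 0⁺`. -/
theorem stmt5 {d : ℕ}
    (μ : Measure (ℝ × EuclideanSpace ℝ (Fin d))) [IsFiniteMeasure μ]
    (ν : Measure ℝ) [IsFiniteMeasure ν]
    (μt : ℝ → Measure (ℝ × EuclideanSpace ℝ (Fin d)))
    (hborel : ∀ φ : ℝ × EuclideanSpace ℝ (Fin d) → ℝ,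
      Continuous φ → HasCompactSupport φ →
      Measurable fun t => ∫ z, φ z ∂(μt t))
    (hfib : ∀ᵐ t ∂ν, μt t Set.univ < ⊤ ∧
      μt t (({t} ×ˢ (Set.univ : Set (EuclideanSpace ℝ (Fin d))))ᶜ) = 0)
    (hdisint : ∀ A : Set (ℝ × EuclideanSpace ℝ (Fin d)), MeasurableSet A →
      μ A = ∫⁻ t, μt t A ∂ν) :
    ∀ᵐ t ∂ν,
      (∀ h : ℝ, 0 < h → 0 < ν (Set.Ioo (t - h) (t + h))) ∧
      ∀ φ : ℝ × EuclideanSpace ℝ (Fin d) → ℝ, Continuous φ → HasCompactSupport φ →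
        Filter.Tendsto
          (fun h : ℝ =>
            (∫ z in (Set.Ioo (t - h) (t + h)) ×ˢ (Set.univ : Set (EuclideanSpace ℝ (Fin d))),
                φ z ∂μ)
              / (ν (Set.Ioo (t - h) (t + h))).toReal)
          (nhdsWithin 0 (Set.Ioi 0)) (nhds (∫ z, φ z ∂(μt t))) := by
  have hfin : ∀ᵐ t ∂ν, IsFiniteMeasure (μt t) := hfib.mono fun t ht => ⟨ht.1⟩
  have hconc : ∀ᵐ t ∂ν, ∀ᵐ z ∂μt t, z.1 = t := hfib.mono fun t ht => by
    rw [ae_iff]; convert ht.2 using 2; ext z; simp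
  have hκ : AEMeasurable μt ν := aemeasurable_measure_of_measurable_integral hborel hfin
  obtain rfl : μ = ν.bind μt :=
    Measure.ext fun A hA => by rw [hdisint A hA, Measure.bind_apply hA hκ]
  obtain ⟨D, hD_count, hD, hD_dense⟩ :=
    exists_countable_dense_hasCompactSupport (ℝ × EuclideanSpace ℝ (Fin d))
  have hD_lim := (ae_ball_iff hD_count).2 fun ψ hψ =>
    ae_tendsto_integral_slab_div hκ hconc ((hD ψ hψ).1.integrable_of_hasCompactSupport (hD ψ hψ).2)
  filter_upwards [Real.ae_forall_measure_Ioo_pos ν, hD_lim, hfin,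
    ae_tendsto_integral_slab_div hκ hconc (integrable_const (1 : ℝ))] with t hpos hψ_lim _ hmass
  refine ⟨hpos, fun φ hφ hφ_supp => ?_⟩
  simp_rw [← integral_toNNReal_inv_smul] at hmass hψ_lim ⊢
  refine tendsto_integral_of_forall_approx (by simpa using hmass) hφ hφ_supp fun ε hε => ?_
  obtain ⟨ψ, hψD, hφψ⟩ := hD_dense φ hφ hφ_supp ε hε
  exact ⟨ψ, (hD ψ hψD).1, (hD ψ hψD).2, hφψ, hψ_lim ψ hψD⟩
end

section
/- Let Q₀, Q₁, Q₂, Q₃ be the four half-open dyadic subsquares of [0,1)² and let L be the map on functions defined by (Lv)(x) := ū(x) + (1/4)Σ_{i=0}^{3} v(A_i(x))·1_{Q_i}(x) for x ∈ [0,1)², where ū := Σ_{i=0}^{3}(i/4)·1_{Q_i}. Then for every p ∈ [1, ∞] and all Lebesgue-measurable v, w : ℝ² → ℝ, the L^p norm with respect to Lebesgue measure restricted to [0,1)² satisfies ‖Lv − Lw‖_{L^p([0,1)²)} = (1/4)·‖v − w‖_{L^p([0,1)²)}. In particular, L is a contraction on L^p([0,1)²) with contraction factor 1/4. -/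
open MeasureTheory Set Filter
open scoped ENNReal NNReal

noncomputable section

/-- The half-open unit square `[0,1)²` in `ℝ²`. -/
def unitSq : Set (ℝ × ℝ) := Set.Ico (0:ℝ) 1 ×ˢ Set.Ico (0:ℝ) 1

/-- The four contractions `B₀, B₁, B₂, B₃` mapping `[0,1)²` onto its four half-open
dyadic subsquares (lower-left, lower-right, upper-left, upper-right). -/
def Bmap (i : Fin 4) (x : ℝ × ℝ) : ℝ × ℝ :=
  (x.1 / 2 + (if i.val % 2 = 1 then (1:ℝ)/2 else 0),
   x.2 / 2 + (if 2 ≤ i.val then (1:ℝ)/2 else 0))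

/-- The inverse maps `A₀, A₁, A₂, A₃` of `B₀, …, B₃`. -/
def Amap (i : Fin 4) (x : ℝ × ℝ) : ℝ × ℝ :=
  (2 * x.1 - (if i.val % 2 = 1 then (1:ℝ) else 0),
   2 * x.2 - (if 2 ≤ i.val then (1:ℝ) else 0))

/-- The four half-open dyadic subsquares `Q₀, Q₁, Q₂, Q₃` of `[0,1)²`. -/
def Qsub (i : Fin 4) : Set (ℝ × ℝ) := Bmap i '' unitSq

/-- The step function `ū = Σ_{i=0}^{3} (i/4)·1_{Q_i}`. -/
def ubar (x : ℝ × ℝ) : ℝ :=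
  ∑ i : Fin 4, ((i.val : ℝ) / 4) * (Qsub i).indicator (fun _ => (1:ℝ)) x

/-- The operator `L`: `(Lv)(x) = ū(x) + (1/4) Σ_i v(A_i x)·1_{Q_i}(x)` on `[0,1)²`,
extended by `0` outside. -/
def Lop (v : ℝ × ℝ → ℝ) : ℝ × ℝ → ℝ :=
  unitSq.indicator fun x =>
    ubar x + (1/4) * ∑ i : Fin 4, (Qsub i).indicator (fun y => v (Amap i y)) x

/-- The `j`-th binary digit `a_j(s) = ⌊2^j s⌋ − 2⌊2^{j−1} s⌋` of `s ∈ [0,1)` (`j ≥ 1`). -/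
def bdigit (j : ℕ) (s : ℝ) : ℤ := ⌊(2:ℝ)^j * s⌋ - 2 * ⌊(2:ℝ)^(j-1) * s⌋

/-- The `j`-th quadrant digit `i_j(x) = a_j(x₁) + 2 a_j(x₂) ∈ {0,1,2,3}` of `x ∈ [0,1)²`. -/
def qdigit (j : ℕ) (x : ℝ × ℝ) : ℤ := bdigit j x.1 + 2 * bdigit j x.2

/-- The Flat Mountain function `u(x) = Σ_{j≥1} i_j(x)·4^{−j}` on `[0,1)²`, `0` outside. -/
def uFM : ℝ × ℝ → ℝ :=
  unitSq.indicator fun x => ∑' j : ℕ, (qdigit (j+1) x : ℝ) / 4^(j+1)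

/-- The iterates `u₀ = 0`, `u_{n+1} = L u_n`. -/
def uIter : ℕ → ℝ × ℝ → ℝ
  | 0 => fun _ => 0
  | (n+1) => Lop (uIter n)

/-- The dyadic square `Q_{i₁,…,i_n} = B_{i₁} ∘ ⋯ ∘ B_{i_n} ([0,1)²)` indexed by a finite
sequence of quadrant digits. -/
def Qseq : List (Fin 4) → Set (ℝ × ℝ)
  | [] => unitSq
  | (i :: l) => Bmap i '' Qseq l

/-- The `j`-th base-4 digit `t_j = ⌊4^j t⌋ − 4⌊4^{j−1} t⌋` of `t ∈ [0,1)` (`j ≥ 1`). -/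
def tdigit (j : ℕ) (t : ℝ) : ℤ := ⌊(4:ℝ)^j * t⌋ - 4 * ⌊(4:ℝ)^(j-1) * t⌋

/-- The Lebesgue (Z-order) space-filling curve `γ`. -/
def lcurve (t : ℝ) : ℝ × ℝ :=
  (∑' j : ℕ, ((tdigit (j+1) t % 2 : ℤ) : ℝ) / 2^(j+1),
   ∑' j : ℕ, ((tdigit (j+1) t / 2 : ℤ) : ℝ) / 2^(j+1))

end

/-!
Let `T x = (fract (2 x₁), fract (2 x₂))` be the doubling map. On `Q_i` the map `A_i` coincides
with `T`, so on `[0,1)²` the constant `ū` cancels and `Lv - Lw = (1/4) (v - w) ∘ T`. The claim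
then reduces to `T` preserving Lebesgue measure on `[0,1)²`, which holds coordinatewise:
`t ↦ fract (2t)` maps each half of `[0,1)` affinely onto `[0,1)`, pushing its measure forward
to half of Lebesgue measure on `[0,1)`.
-/

lemma map_two_mul_sub_restrict_Ico (k : ℝ) :
    (volume.restrict (Ico (k / 2) ((k + 1) / 2))).map (fun t => 2 * t - k)
      = (2 : ℝ≥0∞)⁻¹ • volume.restrict (Ico 0 1) := by
  have hmeas : Measurable (fun t : ℝ => 2 * t - k) := by fun_prop
  have hmap : volume.map (fun t : ℝ => 2 * t - k) = (2 : ℝ≥0∞)⁻¹ • volume := by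
    rw [show (fun t : ℝ => 2 * t - k) = (· - k) ∘ (2 * ·) from rfl,
      ← Measure.map_map (measurable_sub_const k) (measurable_const_mul 2),
      Real.map_volume_mul_left two_ne_zero, Measure.map_smul,
      (measurePreserving_sub_right volume k).map_eq, abs_of_pos (by norm_num),
      ENNReal.ofReal_inv_of_pos two_pos, ENNReal.ofReal_ofNat]
  have hpre : (fun t : ℝ => 2 * t - k) ⁻¹' Ico 0 1 = Ico (k / 2) ((k + 1) / 2) := by
    ext t
    simp only [mem_preimage, mem_Ico]
    constructor <;> rintro ⟨h₁, h₂⟩ <;> constructor <;> linarith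
  rw [← hpre, ← Measure.restrict_map hmeas measurableSet_Ico, hmap, Measure.restrict_smul]

theorem measurePreserving_fract_two_mul :
    MeasurePreserving (fun t : ℝ => Int.fract (2 * t))
      (volume.restrict (Ico 0 1)) (volume.restrict (Ico 0 1)) := by
  have hmeas : Measurable (fun t : ℝ => Int.fract (2 * t)) :=
    measurable_fract.comp (measurable_const_mul 2)
  have half (k : ℤ) : (volume.restrict (Ico ((k : ℝ) / 2) ((k + 1) / 2))).map
      (fun t => Int.fract (2 * t)) = (2 : ℝ≥0∞)⁻¹ • volume.restrict (Ico 0 1) := by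
    rw [← map_two_mul_sub_restrict_Ico]
    refine Measure.map_congr (ae_restrict_of_forall_mem measurableSet_Ico fun t ⟨h₁, h₂⟩ => ?_)
    refine Int.fract_eq_iff.2 ⟨?_, ?_, k, by ring⟩ <;> linarith
  have h₀ := half 0
  have h₁ := half 1
  norm_num at h₀ h₁
  have hsplit : volume.restrict (Ico (0 : ℝ) 1)
      = volume.restrict (Ico 0 (1 / 2)) + volume.restrict (Ico (1 / 2) 1) := by
    rw [← Measure.restrict_union Ico_disjoint_Ico_same measurableSet_Ico,
      Ico_union_Ico_eq_Ico (by norm_num) (by norm_num)]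
  refine ⟨hmeas, ?_⟩
  conv_lhs => rw [hsplit]
  rw [Measure.map_add _ _ hmeas, h₀, h₁, ← add_smul, ENNReal.inv_two_add_inv_two, one_smul]

lemma measurableSet_unitSq : MeasurableSet unitSq :=
  measurableSet_Ico.prod measurableSet_Ico

noncomputable def doublingMap : ℝ × ℝ → ℝ × ℝ :=
  Prod.map (fun t => Int.fract (2 * t)) (fun t => Int.fract (2 * t))

theorem measurePreserving_doublingMap :
    MeasurePreserving doublingMap (volume.restrict unitSq) (volume.restrict unitSq) := by
  have h := measurePreserving_fract_two_mul.prod measurePreserving_fract_two_mul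
  rwa [Measure.prod_restrict, ← Measure.volume_eq_prod] at h

lemma Amap_Bmap (i : Fin 4) (x : ℝ × ℝ) : Amap i (Bmap i x) = x := by
  ext <;> simp only [Amap, Bmap] <;> split_ifs <;> ring

lemma Bmap_Amap (i : Fin 4) (x : ℝ × ℝ) : Bmap i (Amap i x) = x := by
  ext <;> simp only [Amap, Bmap] <;> split_ifs <;> ring

lemma Qsub_eq_preimage_Amap (i : Fin 4) : Qsub i = Amap i ⁻¹' unitSq :=
  congrFun (image_eq_preimage_of_inverse (Amap_Bmap i) (Bmap_Amap i)) unitSq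

lemma doublingMap_eq_Amap_of_mem_Qsub {i : Fin 4} {x : ℝ × ℝ} (hx : x ∈ Qsub i) :
    doublingMap x = Amap i x := by
  rw [Qsub_eq_preimage_Amap] at hx
  obtain ⟨⟨h₁, h₂⟩, h₃, h₄⟩ := hx
  ext
  · refine Int.fract_eq_iff.2 ⟨h₁, h₂, if i.val % 2 = 1 then 1 else 0, ?_⟩
    simp only [Amap]; split_ifs <;> simp
  · refine Int.fract_eq_iff.2 ⟨h₃, h₄, if 2 ≤ i.val then 1 else 0, ?_⟩
    simp only [Amap]; split_ifs <;> simp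

lemma eq_of_mem_Qsub_of_mem_Qsub {i j : Fin 4} {x : ℝ × ℝ} (hi : x ∈ Qsub i) (hj : x ∈ Qsub j) :
    i = j := by
  have h := (doublingMap_eq_Amap_of_mem_Qsub hi).symm.trans (doublingMap_eq_Amap_of_mem_Qsub hj)
  simp only [Amap, Prod.ext_iff, sub_right_inj] at h
  fin_cases i <;> fin_cases j <;> norm_num at h <;> rfl

lemma exists_mem_Qsub {x : ℝ × ℝ} (hx : x ∈ unitSq) : ∃ i, x ∈ Qsub i := by
  obtain ⟨⟨h₁, h₂⟩, h₃, h₄⟩ := hx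
  simp only [Qsub_eq_preimage_Amap, unitSq, mem_preimage, mem_prod, mem_Ico, Amap]
  rcases lt_or_ge x.1 (1 / 2) with ha | ha <;> rcases lt_or_ge x.2 (1 / 2) with hb | hb
  · exact ⟨0, by norm_num; constructor <;> constructor <;> linarith⟩
  · exact ⟨2, by norm_num; constructor <;> constructor <;> linarith⟩
  · exact ⟨1, by norm_num; constructor <;> constructor <;> linarith⟩
  · exact ⟨3, by norm_num; constructor <;> constructor <;> linarith⟩

lemma sum_indicator_Qsub_comp_Amap (v : ℝ × ℝ → ℝ) {x : ℝ × ℝ} (hx : x ∈ unitSq) :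
    ∑ i : Fin 4, (Qsub i).indicator (fun y => v (Amap i y)) x = v (doublingMap x) := by
  obtain ⟨j, hj⟩ := exists_mem_Qsub hx
  rw [Finset.sum_eq_single j (fun i _ hij => indicator_of_notMem
      (fun hi => hij (eq_of_mem_Qsub_of_mem_Qsub hi hj)) _) (by simp),
    indicator_of_mem hj, doublingMap_eq_Amap_of_mem_Qsub hj]

lemma Lop_sub_Lop (v w : ℝ × ℝ → ℝ) :
    (fun x => Lop v x - Lop w x)
      = unitSq.indicator ((1 / 4 : ℝ) • ((fun x => v x - w x) ∘ doublingMap)) := by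
  ext x
  by_cases hx : x ∈ unitSq
  · simp only [Lop, indicator_of_mem hx, sum_indicator_Qsub_comp_Amap _ hx, Pi.smul_apply,
      Function.comp_apply, smul_eq_mul]
    ring
  · simp only [Lop, indicator_of_notMem hx, sub_self]

theorem stmt6_general (p : ℝ≥0∞) (v w : ℝ × ℝ → ℝ)
    (hv : Measurable v) (hw : Measurable w) :
    eLpNorm (fun x => Lop v x - Lop w x) p (volume.restrict unitSq)
      = (1/4 : ℝ≥0∞) * eLpNorm (fun x => v x - w x) p (volume.restrict unitSq) := by
  rw [Lop_sub_Lop, eLpNorm_congr_ae (indicator_ae_eq_restrict measurableSet_unitSq),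
    eLpNorm_const_smul, eLpNorm_comp_measurePreserving (g := fun x => v x - w x)
      (hv.sub hw).aestronglyMeasurable measurePreserving_doublingMap]
  congr 1
  rw [Real.enorm_eq_ofReal (by norm_num), ENNReal.ofReal_div_of_pos four_pos]
  simp

/-- Part (i) of the contraction lemma in the 'Flat Mountain' construction: the map `L`
is a scaled isometry with factor `1/4` on `L^p([0,1)²)` for every `p ∈ [1,∞]`. -/
theorem stmt6 (p : ℝ≥0∞) (hp : 1 ≤ p) (v w : ℝ × ℝ → ℝ)
    (hv : Measurable v) (hw : Measurable w) :
    eLpNorm (fun x => Lop v x - Lop w x) p (volume.restrict unitSq)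
      = (1/4 : ℝ≥0∞) * eLpNorm (fun x => v x - w x) p (volume.restrict unitSq) :=
  stmt6_general p v w hv hw
end

section
/- Define u₀ := 0 and u_{n+1} := L(u_n). Then for every n ∈ ℕ, every finite sequence (i₁,…,i_n) ∈ {0,1,2,3}ⁿ and every x ∈ Q_{i₁,…,i_n}, one has u_n(x) = Σ_{j=1}^{n} i_j·4^{−j}. In particular, u_n is constant on each half-open dyadic square of side length 2^{−n} contained in [0,1)². -/
open MeasureTheory Set Filter
open scoped ENNReal NNReal

lemma half_add_ite_mem_Ico {p : Prop} [Decidable p] {s : ℝ} (hs : s ∈ Ico (0:ℝ) 1) :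
    s / 2 + (if p then (1:ℝ)/2 else 0) ∈ Ico (0:ℝ) 1 := by
  obtain ⟨h0, h1⟩ := hs
  split_ifs <;> constructor <;> linarith

lemma iff_of_half_add_ite_eq {p q : Prop} [Decidable p] [Decidable q] {s t : ℝ}
    (hs : s ∈ Ico (0:ℝ) 1) (ht : t ∈ Ico (0:ℝ) 1)
    (h : s / 2 + (if p then (1:ℝ)/2 else 0) = t / 2 + (if q then (1:ℝ)/2 else 0)) : p ↔ q := by
  obtain ⟨hs0, hs1⟩ := hs
  obtain ⟨ht0, ht1⟩ := ht
  split_ifs at h with hp hq hq <;> simp only [hp, hq] <;> linarith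

lemma Bmap_mem_unitSq (i : Fin 4) {y : ℝ × ℝ} (hy : y ∈ unitSq) : Bmap i y ∈ unitSq :=
  ⟨half_add_ite_mem_Ico hy.1, half_add_ite_mem_Ico hy.2⟩

lemma eq_of_Bmap_eq {i k : Fin 4} {y z : ℝ × ℝ} (hy : y ∈ unitSq) (hz : z ∈ unitSq)
    (h : Bmap i y = Bmap k z) : i = k := by
  have h₁ := iff_of_half_add_ite_eq hy.1 hz.1 (congrArg Prod.fst h)
  have h₂ := iff_of_half_add_ite_eq hy.2 hz.2 (congrArg Prod.snd h)
  have := i.isLt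
  have := k.isLt
  ext
  omega

lemma indicator_Qsub_Bmap (f : ℝ × ℝ → ℝ) (i k : Fin 4) {y : ℝ × ℝ} (hy : y ∈ unitSq) :
    (Qsub k).indicator f (Bmap i y) = if k = i then f (Bmap i y) else 0 := by
  split_ifs with hki
  · subst hki
    exact indicator_of_mem (mem_image_of_mem _ hy) f
  · refine indicator_of_notMem ?_ f
    rintro ⟨z, hz, hzy⟩
    exact hki (eq_of_Bmap_eq hz hy hzy)

lemma Lop_Bmap (v : ℝ × ℝ → ℝ) (i : Fin 4) {y : ℝ × ℝ} (hy : y ∈ unitSq) :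
    Lop v (Bmap i y) = (i.val : ℝ) / 4 + v y / 4 := by
  rw [Lop, indicator_of_mem (Bmap_mem_unitSq i hy), ubar]
  simp only [indicator_Qsub_Bmap _ _ _ hy, Amap_Bmap, mul_ite, mul_one, mul_zero,
    Finset.sum_ite_eq', Finset.mem_univ, if_true]
  ring

lemma Qseq_subset_unitSq (l : List (Fin 4)) : Qseq l ⊆ unitSq := by
  induction l with
  | nil => exact subset_rfl
  | cons i l ih =>
    rintro _ ⟨y, hy, rfl⟩
    exact Bmap_mem_unitSq i (ih hy)

lemma sum_get_cons_div_pow_succ {α K : Type*} [Field K] (g : α → K) (r : K)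
    (a : α) (l : List α) :
    ∑ j : Fin (a :: l).length, g ((a :: l).get j) / r ^ ((j : ℕ) + 1) =
      g a / r + (∑ j : Fin l.length, g (l.get j) / r ^ ((j : ℕ) + 1)) / r := by
  change ∑ j : Fin (l.length + 1), _ = _
  rw [Fin.sum_univ_succ, Finset.sum_div]
  congr 1
  · simp
  · refine Finset.sum_congr rfl fun j _ => ?_
    rw [Fin.val_succ, pow_succ, div_div]
    rfl

/-- Part (i) of the explicit-formula lemma: the iterate `u_n` equals
`Σ_{j=1}^{n} i_j·4^{−j}` on the dyadic square `Q_{i₁,…,i_n}`; in particular `u_n` is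
constant on each half-open dyadic square of side `2^{−n}` in `[0,1)²`. -/
theorem stmt8 (l : List (Fin 4)) (x : ℝ × ℝ) (hx : x ∈ Qseq l) :
    uIter l.length x = ∑ j : Fin l.length, ((l.get j).val : ℝ) / 4 ^ ((j : ℕ) + 1) := by
  induction l generalizing x with
  | nil => simp [uIter]
  | cons i l ih =>
    obtain ⟨y, hy, rfl⟩ := hx
    change Lop (uIter l.length) (Bmap i y) = _
    rw [Lop_Bmap _ i (Qseq_subset_unitSq l hy), ih y hy,
      sum_get_cons_div_pow_succ (fun k : Fin 4 => (k.val : ℝ))]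
end

section
/- Define u₀ := 0, u_{n+1} := L(u_n), and u(x) := Σ_{j=1}^{∞} i_j(x)·4^{−j} on [0,1)². Then for every n ∈ ℕ, every integer j with 0 ≤ j ≤ 4ⁿ, and every m ≥ n, the following sets coincide exactly: { x ∈ [0,1)² : u_n(x) ≥ j/4ⁿ } = { x ∈ [0,1)² : u_m(x) ≥ j/4ⁿ } = { x ∈ [0,1)² : u(x) ≥ j/4ⁿ }. -/
open MeasureTheory Set Filter
open scoped ENNReal NNReal

/-! On `[0,1)²` the iterate `u_n` is the partial sum `Σ_{k ≤ n} i_k(x) 4^{-k}` of the series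
defining `u`: on `Q_i` the operator `L` prepends the digit `i = i_1(x)` to the expansion of
`A_i x`, whose digits are `i_2(x), i_3(x), …`. Hence `u_n ≤ u_m ≤ u`, and `u_n ∈ 4^{-n} ℤ`.
Moreover `u < u_n + 4^{-n}`: the tail is at most `Σ_{k>n} 3·4^{-k} = 4^{-n}`, with strict
inequality because the first coordinate has a binary digit `0` beyond position `n`.
So no level `j/4ⁿ` lies in `(u_n, u]`. -/

lemma floor_two_mul_eq_or (t : ℝ) : ⌊2 * t⌋ = 2 * ⌊t⌋ ∨ ⌊2 * t⌋ = 2 * ⌊t⌋ + 1 := by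
  have h₁ : 2 * ⌊t⌋ ≤ ⌊2 * t⌋ := Int.le_floor.2 (by push_cast; linarith [Int.floor_le t])
  have h₂ : ⌊2 * t⌋ < 2 * ⌊t⌋ + 2 :=
    Int.floor_lt.2 (by push_cast; linarith [Int.lt_floor_add_one t])
  omega

lemma bdigit_succ (j : ℕ) (s : ℝ) : bdigit (j + 1) s = ⌊2 ^ (j + 1) * s⌋ - 2 * ⌊2 ^ j * s⌋ := rfl

lemma bdigit_succ_eq_zero_or_one (j : ℕ) (s : ℝ) :
    bdigit (j + 1) s = 0 ∨ bdigit (j + 1) s = 1 := by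
  rw [bdigit_succ, pow_succ', mul_assoc]
  rcases floor_two_mul_eq_or (2 ^ j * s) with h | h <;> omega

lemma bdigit_succ_succ (j : ℕ) (s : ℝ) (c : ℤ) :
    bdigit (j + 2) s = bdigit (j + 1) (2 * s - c) := by
  have h₁ : (2 : ℝ) ^ (j + 1) * (2 * s - c) = 2 ^ (j + 2) * s - ((2 ^ (j + 1) * c : ℤ) : ℝ) := by
    push_cast; ring
  have h₂ : (2 : ℝ) ^ j * (2 * s - c) = 2 ^ (j + 1) * s - ((2 ^ j * c : ℤ) : ℝ) := by
    push_cast; ring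
  rw [bdigit_succ, bdigit_succ, h₁, h₂, Int.floor_sub_intCast, Int.floor_sub_intCast]
  ring

lemma bdigit_one_of_mem_Ico {s : ℝ} {c : ℤ} (hs : s ∈ Ico (0 : ℝ) 1)
    (hc : 2 * s - c ∈ Ico (0 : ℝ) 1) : bdigit 1 s = c := by
  have h₁ : ⌊s⌋ = 0 := Int.floor_eq_zero_iff.2 hs
  have h₂ : ⌊2 * s - c⌋ = 0 := Int.floor_eq_zero_iff.2 hc
  rw [Int.floor_sub_intCast] at h₂
  rw [bdigit_succ 0, pow_one, pow_zero, one_mul, h₁]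
  omega

/-- Otherwise `⌊2^n s⌋ + 1 - 2^n s` would be a positive number at most `2^{-k}` for every `k`. -/
lemma exists_bdigit_eq_zero (s : ℝ) (n : ℕ) : ∃ k, bdigit (k + n + 1) s = 0 := by
  by_contra! h
  have hone : ∀ k, bdigit (k + n + 1) s = 1 := fun k =>
    (bdigit_succ_eq_zero_or_one _ s).resolve_left (h k)
  have hfloor : ∀ k : ℕ, ⌊(2 : ℝ) ^ (k + n) * s⌋ + 1 = 2 ^ k * (⌊(2 : ℝ) ^ n * s⌋ + 1) := by
    intro k
    induction k with
    | zero => simp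
    | succ k ih =>
      have := hone k
      rw [bdigit_succ] at this
      rw [show k + 1 + n = k + n + 1 by omega, pow_succ (2 : ℤ) k]
      linear_combination this + 2 * ih
  set ε := (⌊(2 : ℝ) ^ n * s⌋ : ℝ) + 1 - 2 ^ n * s
  have hε : 0 < ε := by linarith [Int.lt_floor_add_one ((2 : ℝ) ^ n * s)]
  obtain ⟨k, hk⟩ := pow_unbounded_of_one_lt ε⁻¹ one_lt_two
  have : (2 : ℝ) ^ k * ε ≤ 1 := by
    have hc : ((⌊(2 : ℝ) ^ (k + n) * s⌋ + 1 : ℤ) : ℝ) = _ := congrArg _ (hfloor k)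
    push_cast at hc
    calc (2 : ℝ) ^ k * ε = 2 ^ k * (⌊(2 : ℝ) ^ n * s⌋ + 1) - 2 ^ (k + n) * s := by
          rw [pow_add]; ring
      _ = ⌊(2 : ℝ) ^ (k + n) * s⌋ + 1 - 2 ^ (k + n) * s := by rw [hc]
      _ ≤ 1 := by linarith [Int.floor_le ((2 : ℝ) ^ (k + n) * s)]
  linarith [(inv_lt_iff_one_lt_mul₀ hε).1 hk]

lemma mem_unitSq {x : ℝ × ℝ} : x ∈ unitSq ↔ x.1 ∈ Ico (0 : ℝ) 1 ∧ x.2 ∈ Ico (0 : ℝ) 1 := Iff.rfl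

lemma Amap_eq (i : Fin 4) (x : ℝ × ℝ) :
    Amap i x = (2 * x.1 - (i.val % 2 : ℕ), 2 * x.2 - (i.val / 2 : ℕ)) := by
  fin_cases i <;> norm_num [Amap]

lemma mem_Qsub_iff {i : Fin 4} {x : ℝ × ℝ} : x ∈ Qsub i ↔ Amap i x ∈ unitSq := by
  constructor
  · rintro ⟨y, hy, rfl⟩
    convert hy using 1
    ext <;> simp only [Bmap, Amap] <;> split_ifs <;> ring
  · exact fun h => ⟨_, h, by ext <;> simp only [Bmap, Amap] <;> split_ifs <;> ring⟩

lemma Qsub_subset_unitSq (i : Fin 4) : Qsub i ⊆ unitSq := by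
  rintro _ ⟨y, ⟨⟨hy₁, hy₁'⟩, ⟨hy₂, hy₂'⟩⟩, rfl⟩
  simp only [mem_unitSq, Bmap, mem_Ico]
  split_ifs <;> refine ⟨⟨?_, ?_⟩, ?_, ?_⟩ <;> linarith

lemma qdigit_one_of_mem_Qsub {i : Fin 4} {x : ℝ × ℝ} (hx : x ∈ Qsub i) : qdigit 1 x = i.val := by
  obtain ⟨hs₁, hs₂⟩ := Qsub_subset_unitSq i hx
  rw [mem_Qsub_iff, Amap_eq] at hx
  obtain ⟨hc₁, hc₂⟩ := hx
  rw [qdigit, bdigit_one_of_mem_Ico (c := (i.val % 2 : ℕ)) hs₁ (by exact_mod_cast hc₁),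
    bdigit_one_of_mem_Ico (c := (i.val / 2 : ℕ)) hs₂ (by exact_mod_cast hc₂)]
  omega

lemma eq_of_mem_Qsub {i k : Fin 4} {x : ℝ × ℝ} (hi : x ∈ Qsub i) (hk : x ∈ Qsub k) : i = k := by
  have := (qdigit_one_of_mem_Qsub hi).symm.trans (qdigit_one_of_mem_Qsub hk)
  omega

lemma qdigit_Amap (k : ℕ) (i : Fin 4) (x : ℝ × ℝ) :
    qdigit (k + 1) (Amap i x) = qdigit (k + 2) x := by
  rw [Amap_eq, qdigit, qdigit, bdigit_succ_succ k x.1 (i.val % 2 : ℕ),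
    bdigit_succ_succ k x.2 (i.val / 2 : ℕ), Int.cast_natCast, Int.cast_natCast]

lemma sum_indicator_Qsub_eq {i : Fin 4} {x : ℝ × ℝ} (hx : x ∈ Qsub i) (f : Fin 4 → ℝ × ℝ → ℝ) :
    ∑ k : Fin 4, (Qsub k).indicator (f k) x = f i x := by
  rw [Finset.sum_eq_single_of_mem i (Finset.mem_univ i), indicator_of_mem hx]
  exact fun k _ hk => indicator_of_notMem (fun h => hk (eq_of_mem_Qsub h hx)) _

lemma Lop_apply_of_mem_Qsub (v : ℝ × ℝ → ℝ) {i : Fin 4} {x : ℝ × ℝ} (hx : x ∈ Qsub i) :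
    Lop v x = i.val / 4 + v (Amap i x) / 4 := by
  have hubar : ubar x = i.val / 4 := by
    simp only [ubar, ← indicator_const_mul, mul_one]
    exact sum_indicator_Qsub_eq hx fun k _ => (k.val : ℝ) / 4
  rw [Lop, indicator_of_mem (Qsub_subset_unitSq i hx), hubar,
    sum_indicator_Qsub_eq hx fun k y => v (Amap k y)]
  ring

lemma uIter_eq_sum (n : ℕ) {x : ℝ × ℝ} (hx : x ∈ unitSq) :
    uIter n x = ∑ k ∈ Finset.range n, (qdigit (k + 1) x : ℝ) / 4 ^ (k + 1) := by
  induction n generalizing x with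
  | zero => rfl
  | succ n ih =>
    obtain ⟨i, hi⟩ := exists_mem_Qsub hx
    rw [uIter, Lop_apply_of_mem_Qsub _ hi, ih (mem_Qsub_iff.1 hi), Finset.sum_range_succ',
      Finset.sum_div, add_comm]
    congr 1
    · refine Finset.sum_congr rfl fun k _ => ?_
      rw [qdigit_Amap, pow_succ]
      ring
    · rw [zero_add, qdigit_one_of_mem_Qsub hi]
      norm_num

lemma uFM_eq_tsum {x : ℝ × ℝ} (hx : x ∈ unitSq) :
    uFM x = ∑' k : ℕ, (qdigit (k + 1) x : ℝ) / 4 ^ (k + 1) :=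
  indicator_of_mem hx _

lemma qdigit_succ_nonneg (j : ℕ) (x : ℝ × ℝ) : 0 ≤ qdigit (j + 1) x := by
  rcases bdigit_succ_eq_zero_or_one j x.1 with h₁ | h₁ <;>
    rcases bdigit_succ_eq_zero_or_one j x.2 with h₂ | h₂ <;> simp [qdigit, h₁, h₂]

lemma qdigit_succ_le_three (j : ℕ) (x : ℝ × ℝ) : qdigit (j + 1) x ≤ 3 := by
  rcases bdigit_succ_eq_zero_or_one j x.1 with h₁ | h₁ <;>
    rcases bdigit_succ_eq_zero_or_one j x.2 with h₂ | h₂ <;> simp [qdigit, h₁, h₂]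

lemma exists_qdigit_lt_three (x : ℝ × ℝ) (n : ℕ) : ∃ k, qdigit (k + n + 1) x < 3 := by
  obtain ⟨k, hk⟩ := exists_bdigit_eq_zero x.1 n
  exact ⟨k, by rcases bdigit_succ_eq_zero_or_one (k + n) x.2 with h₂ | h₂ <;> simp [qdigit, hk, h₂]⟩

lemma hasSum_three_div_four_pow : HasSum (fun k : ℕ => (3 : ℝ) / 4 ^ (k + 1)) 1 := by
  have h := (hasSum_geometric_of_lt_one (r := (1 / 4 : ℝ)) (by norm_num) (by norm_num)).mul_left
    (3 / 4)
  have e : (fun k : ℕ => (3 / 4 : ℝ) * (1 / 4) ^ k) = fun k => 3 / 4 ^ (k + 1) := by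
    ext k
    rw [pow_succ, one_div_pow]
    ring
  rwa [e, show (3 / 4 : ℝ) * (1 - 1 / 4)⁻¹ = 1 by norm_num] at h

lemma summable_digits_div_four_pow {d : ℕ → ℤ} (hd₀ : ∀ k, 0 ≤ d k) (hd₃ : ∀ k, d k ≤ 3) :
    Summable fun k => (d k : ℝ) / 4 ^ (k + 1) :=
  hasSum_three_div_four_pow.summable.of_nonneg_of_le
    (fun k => div_nonneg (by exact_mod_cast hd₀ k) (by positivity))
    (fun k => div_le_div_of_nonneg_right (by exact_mod_cast hd₃ k) (by positivity))

lemma tsum_digits_div_four_pow_lt_one {d : ℕ → ℤ} (hd₀ : ∀ k, 0 ≤ d k) (hd₃ : ∀ k, d k ≤ 3)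
    (hlt : ∃ k, d k < 3) : ∑' k, (d k : ℝ) / 4 ^ (k + 1) < 1 := by
  obtain ⟨i, hi⟩ := hlt
  rw [← hasSum_three_div_four_pow.tsum_eq]
  exact Summable.tsum_lt_tsum_of_nonneg
    (fun k => div_nonneg (by exact_mod_cast hd₀ k) (by positivity))
    (fun k => div_le_div_of_nonneg_right (by exact_mod_cast hd₃ k) (by positivity))
    (div_lt_div_of_pos_right (by exact_mod_cast hi) (by positivity))
    hasSum_three_div_four_pow.summable

lemma summable_qdigit_div_four_pow (x : ℝ × ℝ) :
    Summable fun k => (qdigit (k + 1) x : ℝ) / 4 ^ (k + 1) :=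
  summable_digits_div_four_pow (qdigit_succ_nonneg · x) (qdigit_succ_le_three · x)

lemma uIter_mono {x : ℝ × ℝ} (hx : x ∈ unitSq) {n m : ℕ} (hnm : n ≤ m) :
    uIter n x ≤ uIter m x := by
  rw [uIter_eq_sum n hx, uIter_eq_sum m hx]
  exact Finset.sum_le_sum_of_subset_of_nonneg (Finset.range_subset_range.2 hnm)
    fun k _ _ => div_nonneg (by exact_mod_cast qdigit_succ_nonneg k x) (by positivity)

lemma uIter_le_uFM {x : ℝ × ℝ} (hx : x ∈ unitSq) (n : ℕ) : uIter n x ≤ uFM x := by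
  rw [uIter_eq_sum n hx, uFM_eq_tsum hx]
  exact (summable_qdigit_div_four_pow x).sum_le_tsum _
    fun k _ => div_nonneg (by exact_mod_cast qdigit_succ_nonneg k x) (by positivity)

lemma uFM_lt_uIter_add {x : ℝ × ℝ} (hx : x ∈ unitSq) (n : ℕ) :
    uFM x < uIter n x + 1 / 4 ^ n := by
  have htail : ∑' k, (qdigit (k + n + 1) x : ℝ) / 4 ^ (k + n + 1)
      = (∑' k, (qdigit (k + n + 1) x : ℝ) / 4 ^ (k + 1)) / 4 ^ n := by
    rw [← tsum_div_const]
    congr 1 with k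
    rw [show k + n + 1 = k + 1 + n by omega, pow_add, div_div]
  have hlt : ∑' k, (qdigit (k + n + 1) x : ℝ) / 4 ^ (k + 1) < 1 :=
    tsum_digits_div_four_pow_lt_one (fun _ => qdigit_succ_nonneg _ x)
      (fun _ => qdigit_succ_le_three _ x) (exists_qdigit_lt_three x n)
  rw [uFM_eq_tsum hx, uIter_eq_sum n hx,
    ← (summable_qdigit_div_four_pow x).sum_add_tsum_nat_add n, htail]
  gcongr

lemma exists_int_uIter_eq (n : ℕ) {x : ℝ × ℝ} (hx : x ∈ unitSq) :
    ∃ z : ℤ, uIter n x = z / 4 ^ n := by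
  induction n generalizing x with
  | zero => exact ⟨0, by simp [uIter]⟩
  | succ n ih =>
    obtain ⟨i, hi⟩ := exists_mem_Qsub hx
    obtain ⟨z, hz⟩ := ih (mem_Qsub_iff.1 hi)
    refine ⟨i.val * 4 ^ n + z, ?_⟩
    rw [uIter, Lop_apply_of_mem_Qsub _ hi, hz, pow_succ]
    push_cast
    field_simp

lemma le_uIter_of_le_uFM {x : ℝ × ℝ} (hx : x ∈ unitSq) {n : ℕ} {j : ℤ}
    (h : (j : ℝ) / 4 ^ n ≤ uFM x) : (j : ℝ) / 4 ^ n ≤ uIter n x := by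
  obtain ⟨z, hz⟩ := exists_int_uIter_eq n hx
  have hlt : (j : ℝ) / 4 ^ n < (z + 1) / 4 ^ n := by
    calc (j : ℝ) / 4 ^ n ≤ uFM x := h
      _ < z / 4 ^ n + 1 / 4 ^ n := hz ▸ uFM_lt_uIter_add hx n
      _ = (z + 1) / 4 ^ n := by ring
  have hjz : (j : ℝ) < z + 1 := (div_lt_div_iff_of_pos_right (by positivity)).1 hlt
  rw [hz]
  gcongr
  exact_mod_cast Int.lt_add_one_iff.1 (by exact_mod_cast hjz)

theorem stmt11_general (n : ℕ) (j : ℕ) (m : ℕ) (hm : n ≤ m) :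
    {x ∈ unitSq | (j : ℝ) / 4 ^ n ≤ uIter n x}
        = {x ∈ unitSq | (j : ℝ) / 4 ^ n ≤ uIter m x} ∧
    {x ∈ unitSq | (j : ℝ) / 4 ^ n ≤ uIter n x}
        = {x ∈ unitSq | (j : ℝ) / 4 ^ n ≤ uFM x} := by
  have key : ∀ x ∈ unitSq, (j : ℝ) / 4 ^ n ≤ uFM x → (j : ℝ) / 4 ^ n ≤ uIter n x :=
    fun x hx => by simpa only [Int.cast_natCast] using le_uIter_of_le_uFM hx (n := n) (j := j)
  constructor <;> ext x <;> refine and_congr_right fun hx => ⟨fun h => ?_, fun h => ?_⟩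
  · exact h.trans (uIter_mono hx hm)
  · exact key x hx (h.trans (uIter_le_uFM hx m))
  · exact h.trans (uIter_le_uFM hx n)
  · exact key x hx h

/-- Superlevel-set stability (item (ii) of the properties lemma): for every `n`, every
`j ≤ 4ⁿ` and every `m ≥ n`, the superlevel sets of `u_n`, `u_m` and `u` at the dyadic
level `j/4ⁿ` coincide exactly in `[0,1)²`. -/
theorem stmt11 (n : ℕ) (j : ℕ) (hj : j ≤ 4 ^ n) (m : ℕ) (hm : n ≤ m) :
    {x ∈ unitSq | (j : ℝ) / 4 ^ n ≤ uIter n x}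
        = {x ∈ unitSq | (j : ℝ) / 4 ^ n ≤ uIter m x} ∧
    {x ∈ unitSq | (j : ℝ) / 4 ^ n ≤ uIter n x}
        = {x ∈ unitSq | (j : ℝ) / 4 ^ n ≤ uFM x} :=
  stmt11_general n j m hm
end
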